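/- For every N ∈ ℕ, every t > 0 and all x, y ∈ ℝ^N_<, the Karlin–McGregor determinant is strictly positive: f_N(t; x, y) = det_{1≤i,j≤N}[p_t(x_i, y_j)] > 0. In particular 𝒩_N(t; x) > 0 for all t > 0 and x ∈ ℝ^N_<. -/

import Mathlib

/-! Completing the square, `p_t(x_i, y_j) = g(x_i) h(y_j) exp(x_i y_j / t)` with `g, h > 0`, so
`f_N(t; x, y)` is a positive multiple of `det[exp(a_i b_j)]` with `a = x / t` and `b = y` strictly
increasing. That determinant never vanishes: a vector in its left kernel gives a combination
`∑ c_i exp(a_i s)` with `N` zeros, which forces `c = 0` by induction on `N` using Rolle's theorem.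
The Weyl chamber is convex, so the determinant has constant sign in `b`, and at
`b = (0, 1, …, N - 1)` it is the Vandermonde determinant of the increasing numbers `exp(a_i)`.
Finally `f_N` is integrable, being a signed sum of products of Gaussian densities, and is positive
on the open nonempty chamber, so `𝒩_N > 0`. -/

open MeasureTheory

/-- The heat kernel `p_t(x,y) = (2πt)^{-1/2} exp(-(x-y)²/(2t))`. -/
noncomputable def heatKernel (t x y : ℝ) : ℝ :=
  (1 / Real.sqrt (2 * Real.pi * t)) * Real.exp (-(x - y)^2 / (2 * t))

/-- The Weyl chamber `ℝ^N_< = {x : x_1 < x_2 < ⋯ < x_N}`. -/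
def weylChamber (N : ℕ) : Set (Fin N → ℝ) := {x | StrictMono x}

/-- The Karlin–McGregor determinant `f_N(t; x, y) = det[p_t(x_i, y_j)]`. -/
noncomputable def fKM (N : ℕ) (t : ℝ) (x y : Fin N → ℝ) : ℝ :=
  Matrix.det (Matrix.of fun i j => heatKernel t (x i) (y j))

/-- The non-colliding probability `𝒩_N(t; x) = ∫_{ℝ^N_<} f_N(t; x, y) dy`. -/
noncomputable def NKM (N : ℕ) (t : ℝ) (x : Fin N → ℝ) : ℝ :=
  ∫ y in weylChamber N, fKM N t x y

open Set Real

theorem exists_strictMono_hasDerivAt_eq_zero {n : ℕ} {f f' : ℝ → ℝ}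
    (hf : ∀ s, HasDerivAt f (f' s) s) {b : Fin (n + 1) → ℝ} (hb : StrictMono b)
    (hzero : ∀ j, f (b j) = 0) : ∃ ξ : Fin n → ℝ, StrictMono ξ ∧ ∀ j, f' (ξ j) = 0 := by
  have hrolle (j : Fin n) : ∃ ξ ∈ Ioo (b j.castSucc) (b j.succ), f' ξ = 0 :=
    exists_hasDerivAt_eq_zero (hb j.castSucc_lt_succ)
      (fun s _ => (hf s).continuousAt.continuousWithinAt) (by rw [hzero, hzero])
      (fun s _ => hf s)
  choose ξ hξ hξzero using hrolle
  refine ⟨ξ, fun j k hjk => ?_, hξzero⟩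
  calc ξ j < b j.succ := (hξ j).2
    _ ≤ b k.castSucc := hb.monotone (Fin.succ_le_castSucc_iff.mpr hjk)
    _ < ξ k := (hξ k).1

theorem hasDerivAt_sum_mul_exp_mul {ι : Type*} (s : Finset ι) (c d : ι → ℝ) (x : ℝ) :
    HasDerivAt (fun x => ∑ i ∈ s, c i * exp (d i * x)) (∑ i ∈ s, c i * d i * exp (d i * x)) x :=
  HasDerivAt.fun_sum fun i _ => by
    simpa [mul_assoc, mul_comm (d i)] using
      (((hasDerivAt_id x).const_mul (d i)).exp).const_mul (c i)

theorem eq_zero_of_sum_mul_exp_mul_eq_zero {N : ℕ} {a : Fin N → ℝ} (ha : Function.Injective a)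
    {c b : Fin N → ℝ} (hb : StrictMono b) (hzero : ∀ j, ∑ i, c i * exp (a i * b j) = 0) :
    c = 0 := by
  induction N with
  | zero => exact Subsingleton.elim _ _
  | succ n ih =>
    -- Dividing by `exp (a 0 * s)` makes the first term constant, so Rolle's theorem removes it.
    set d : Fin (n + 1) → ℝ := fun i => a i - a 0
    have hd (i : Fin n) : d i.succ ≠ 0 := sub_ne_zero.mpr (ha.ne (Fin.succ_ne_zero i))
    have hshift (j) : ∑ i, c i * exp (d i * b j) = 0 := by
      simp_rw [d, sub_mul, exp_sub, ← mul_div_assoc, ← Finset.sum_div, hzero, zero_div]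
    obtain ⟨ξ, hξ, hξzero⟩ := exists_strictMono_hasDerivAt_eq_zero
      (hasDerivAt_sum_mul_exp_mul _ c d) hb hshift
    have hsucc : (fun i => c (Fin.succ i) * d i.succ) = 0 := by
      refine ih (a := fun i => d i.succ) (fun i j hij => ?_) hξ fun j => ?_
      · simpa [d, ha.eq_iff] using hij
      · simpa [Fin.sum_univ_succ, d, mul_assoc] using hξzero j
    have hc_succ (i : Fin n) : c i.succ = 0 :=
      (mul_eq_zero.mp (congrFun hsucc i)).resolve_right (hd i)
    have hc_zero : c 0 = 0 := by
      simpa [Fin.sum_univ_succ, hc_succ, exp_ne_zero] using hzero 0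
    ext i
    exact Fin.cases hc_zero hc_succ i

theorem det_exp_mul_ne_zero {N : ℕ} {a b : Fin N → ℝ} (ha : Function.Injective a)
    (hb : StrictMono b) : (Matrix.of fun i j => exp (a i * b j)).det ≠ 0 := by
  intro hdet
  obtain ⟨c, hc, hcM⟩ := Matrix.exists_vecMul_eq_zero_iff.mpr hdet
  refine hc (eq_zero_of_sum_mul_exp_mul_eq_zero ha hb fun j => ?_)
  simpa [Matrix.vecMul, dotProduct] using congrFun hcM j

theorem convex_weylChamber (N : ℕ) : Convex ℝ (weylChamber N) := by
  intro b hb b' hb' s s' hs hs' hss'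
  rcases hs.lt_or_eq with hs | rfl
  · exact (hb.const_mul hs).add_monotone (hb'.monotone.const_mul hs')
  · rw [zero_add] at hss'
    subst hss'
    simpa using hb'

theorem isOpen_weylChamber (N : ℕ) : IsOpen (weylChamber N) := by
  have : weylChamber N = ⋂ (i : Fin N) (j : Fin N) (_ : i < j), {y | y i < y j} := by
    ext y
    simp [weylChamber, StrictMono]
  rw [this]
  exact isOpen_iInter_of_finite fun i => isOpen_iInter_of_finite fun j =>
    isOpen_iInter_of_finite fun _ => isOpen_lt (continuous_apply i) (continuous_apply j)

theorem natCast_mem_weylChamber (N : ℕ) : (fun j : Fin N => (j : ℝ)) ∈ weylChamber N :=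
  fun _ _ hij => by simpa using hij

theorem det_exp_mul_natCast_pos {N : ℕ} {a : Fin N → ℝ} (ha : StrictMono a) :
    0 < (Matrix.of fun i (j : Fin N) => exp (a i * j)).det := by
  have hvdm : (Matrix.of fun i (j : Fin N) => exp (a i * j)) = Matrix.vandermonde (exp ∘ a) := by
    ext i j
    simp [Matrix.vandermonde, mul_comm (a i), exp_nat_mul]
  rw [hvdm, Matrix.det_vandermonde]
  exact Finset.prod_pos fun i _ => Finset.prod_pos fun j hj =>
    sub_pos.mpr (exp_lt_exp.mpr (ha (Finset.mem_Ioi.mp hj)))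

theorem det_exp_mul_pos {N : ℕ} {a b : Fin N → ℝ} (ha : StrictMono a) (hb : StrictMono b) :
    0 < (Matrix.of fun i j => exp (a i * b j)).det := by
  set F : (Fin N → ℝ) → ℝ := fun b => (Matrix.of fun i j => exp (a i * b j)).det
  have hF : Continuous F := by fun_prop
  by_contra! hle
  obtain ⟨b', hb', hF0⟩ := (convex_weylChamber N).isPreconnected.intermediate_value hb
    (natCast_mem_weylChamber N) hF.continuousOn ⟨hle, (det_exp_mul_natCast_pos ha).le⟩
  exact det_exp_mul_ne_zero ha.injective hb' hF0

theorem heatKernel_pos {t : ℝ} (ht : 0 < t) (x y : ℝ) : 0 < heatKernel t x y := by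
  unfold heatKernel
  positivity

theorem heatKernel_eq_mul_exp (t x y : ℝ) :
    heatKernel t x y = heatKernel t x 0 * (exp (-y ^ 2 / (2 * t)) * exp (x / t * y)) := by
  rcases eq_or_ne t 0 with rfl | ht
  · simp [heatKernel]
  · rw [heatKernel, heatKernel, ← exp_add, mul_assoc _ (exp _), ← exp_add]
    congr 2
    field_simp
    ring

theorem fKM_eq_mul_det_exp (N : ℕ) (t : ℝ) (x y : Fin N → ℝ) :
    fKM N t x y = (∏ i, heatKernel t (x i) 0) *
      ((∏ j, exp (-y j ^ 2 / (2 * t))) * (Matrix.of fun i j => exp (x i / t * y j)).det) := by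
  simp_rw [fKM, heatKernel_eq_mul_exp t (x _) (y _)]
  rw [← Matrix.det_mul_row, ← Matrix.det_mul_column]
  rfl

theorem fKM_pos {N : ℕ} {t : ℝ} (ht : 0 < t) {x y : Fin N → ℝ} (hx : StrictMono x)
    (hy : StrictMono y) : 0 < fKM N t x y := by
  rw [fKM_eq_mul_det_exp]
  have hrow : 0 < ∏ i, heatKernel t (x i) 0 := Finset.prod_pos fun i _ => heatKernel_pos ht _ _
  have hcol : 0 < ∏ j, exp (-y j ^ 2 / (2 * t)) := Finset.prod_pos fun j _ => exp_pos _
  exact mul_pos hrow (mul_pos hcol (det_exp_mul_pos (hx.div_const ht) hy))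

theorem heatKernel_eq_gaussianPDFReal {t : ℝ} (ht : 0 ≤ t) (x : ℝ) :
    heatKernel t x = ProbabilityTheory.gaussianPDFReal x t.toNNReal := by
  ext y
  rw [heatKernel, ProbabilityTheory.gaussianPDFReal, Real.coe_toNNReal _ ht, one_div, ← neg_sub y x,
    neg_sq]

theorem integrable_fKM (N : ℕ) {t : ℝ} (ht : 0 ≤ t) (x : Fin N → ℝ) :
    Integrable (fKM N t x) := by
  have hexpand : fKM N t x = fun y => ∑ σ : Equiv.Perm (Fin N),
      (Equiv.Perm.sign σ : ℝ) * ∏ i, heatKernel t (x (σ i)) (y i) := by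
    ext y
    simp [fKM, Matrix.det_apply, Units.smul_def]
  rw [hexpand]
  refine integrable_finsetSum _ fun σ _ => (Integrable.fintype_prod fun i => ?_).const_mul _
  rw [heatKernel_eq_gaussianPDFReal ht]
  exact ProbabilityTheory.integrable_gaussianPDFReal _ _

theorem setIntegral_pos_of_isOpen {X : Type*} [TopologicalSpace X] [MeasurableSpace X]
    [OpensMeasurableSpace X] {μ : Measure X} [μ.IsOpenPosMeasure] {s : Set X} (hs : IsOpen s)
    (hne : s.Nonempty) {f : X → ℝ} (hf : IntegrableOn f s μ) (hpos : ∀ x ∈ s, 0 < f x) :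
    0 < ∫ x in s, f x ∂μ := by
  have hnonneg : 0 ≤ᵐ[μ.restrict s] f :=
    (ae_restrict_mem hs.measurableSet).mono fun x hx => (hpos x hx).le
  rw [setIntegral_pos_iff_support_of_nonneg_ae hnonneg hf]
  exact (hs.measure_pos μ hne).trans_le
    (measure_mono fun x hx => ⟨(hpos x hx).ne', hx⟩)

/-- Strict positivity of the Karlin–McGregor determinant on the Weyl chamber, and,
in particular, of the non-colliding probability `𝒩_N`. -/
theorem karlinMcGregor_pos (N : ℕ) (t : ℝ) (ht : 0 < t)
    (x : Fin N → ℝ) (hx : x ∈ weylChamber N) :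
    (∀ y : Fin N → ℝ, y ∈ weylChamber N → 0 < fKM N t x y) ∧ 0 < NKM N t x := by
  have hpos (y : Fin N → ℝ) (hy : y ∈ weylChamber N) : 0 < fKM N t x y := fKM_pos ht hx hy
  exact ⟨hpos, setIntegral_pos_of_isOpen (isOpen_weylChamber N) ⟨_, natCast_mem_weylChamber N⟩
    (integrable_fKM N ht.le x).integrableOn hpos⟩
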